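/- arXiv:2104.14266 — 5 statements merged into one kernel-verified Lean document; each statement's English description precedes it below -/
import Mathlib

section
/- For all step-wMSO formulas Ψ₁ and Ψ₂, there exists (w,σ) ∈ Σ⁺_val with ⟦Ψ₁⟧(w,σ) = ⟦Ψ₂⟧(w,σ) if and only if the MSO formula ⋁_{r ∈ R(Ψ₁)∩R(Ψ₂)} (φ(Ψ₁,r) ∧ φ(Ψ₂,r)) is satisfiable (where the empty disjunction is ¬⊤). -/
namespace WMSO

/-- MSO formulas over alphabet `A`; first- and second-order variables are `ℕ`. -/
inductive MSO (A : Type) : Type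
  | top : MSO A
  | pred : A → ℕ → MSO A
  | le : ℕ → ℕ → MSO A
  | mem : ℕ → ℕ → MSO A
  | not : MSO A → MSO A
  | and : MSO A → MSO A → MSO A
  | allFO : ℕ → MSO A → MSO A
  | allSO : ℕ → MSO A → MSO A

/-- A nonempty word over `A` together with a valuation of first-order variables
(positions of the word) and second-order variables (sets of positions):
an element of `Σ⁺_val`. -/
structure WVal (A : Type) : Type where
  word : List A
  nonempty : word ≠ []
  fo : ℕ → Fin word.length
  so : ℕ → Finset (Fin word.length)

variable {A R : Type}

def WVal.updFO (m : WVal A) (x : ℕ) (i : Fin m.word.length) : WVal A :=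
  { m with fo := Function.update m.fo x i }

def WVal.updSO (m : WVal A) (X : ℕ) (I : Finset (Fin m.word.length)) : WVal A :=
  { m with so := Function.update m.so X I }

/-- Standard MSO satisfaction over pairs `(w,σ)`. -/
def MSO.Sat : MSO A → WVal A → Prop
  | .top, _ => True
  | .pred a x, m => m.word.get (m.fo x) = a
  | .le x y, m => (m.fo x : ℕ) ≤ (m.fo y : ℕ)
  | .mem x X, m => m.fo x ∈ m.so X
  | .not φ, m => ¬ φ.Sat m
  | .and φ ψ, m => φ.Sat m ∧ ψ.Sat m
  | .allFO x φ, m => ∀ i, φ.Sat (m.updFO x i)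
  | .allSO X φ, m => ∀ I, φ.Sat (m.updSO X I)

/-- `(w,σ)` satisfies every formula in `Γ`. -/
def SatAll (Γ : Set (MSO A)) (m : WVal A) : Prop := ∀ φ ∈ Γ, φ.Sat m

/-- Semantic entailment for MSO (which, by completeness of MSO over finite
words, coincides with derivability). -/
def Entails (Γ : Set (MSO A)) (φ : MSO A) : Prop := ∀ m : WVal A, SatAll Γ m → φ.Sat m

/-- Disjunction as a derived MSO connective. -/
def MSO.or (φ ψ : MSO A) : MSO A := .not (.and (.not φ) (.not ψ))

/-- `⋁` over a list of MSO formulas; the empty disjunction is `¬⊤`. -/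
def bigOr : List (MSO A) → MSO A
  | [] => .not .top
  | φ :: l => φ.or (bigOr l)

/-! ### Variable occurrences and renaming -/

/-- First-order variable `x` occurs free in an MSO formula. -/
def MSO.FreeFO (x : ℕ) : MSO A → Prop
  | .top => False
  | .pred _ z => z = x
  | .le z w => z = x ∨ w = x
  | .mem z _ => z = x
  | .not φ => φ.FreeFO x
  | .and φ ψ => φ.FreeFO x ∨ ψ.FreeFO x
  | .allFO z φ => z ≠ x ∧ φ.FreeFO x
  | .allSO _ φ => φ.FreeFO x

/-- Second-order variable `X` occurs free in an MSO formula. -/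
def MSO.FreeSO (X : ℕ) : MSO A → Prop
  | .top => False
  | .pred _ _ => False
  | .le _ _ => False
  | .mem _ Z => Z = X
  | .not φ => φ.FreeSO X
  | .and φ ψ => φ.FreeSO X ∨ ψ.FreeSO X
  | .allFO _ φ => φ.FreeSO X
  | .allSO Z φ => Z ≠ X ∧ φ.FreeSO X

/-- First-order variable `y` occurs (anywhere) in an MSO formula. -/
def MSO.OccFO (y : ℕ) : MSO A → Prop
  | .top => False
  | .pred _ z => z = y
  | .le z w => z = y ∨ w = y
  | .mem z _ => z = y
  | .not φ => φ.OccFO y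
  | .and φ ψ => φ.OccFO y ∨ ψ.OccFO y
  | .allFO z φ => z = y ∨ φ.OccFO y
  | .allSO _ φ => φ.OccFO y

/-- Second-order variable `Y` occurs (anywhere) in an MSO formula. -/
def MSO.OccSO (Y : ℕ) : MSO A → Prop
  | .top => False
  | .pred _ _ => False
  | .le _ _ => False
  | .mem _ Z => Z = Y
  | .not φ => φ.OccSO Y
  | .and φ ψ => φ.OccSO Y ∨ ψ.OccSO Y
  | .allFO _ φ => φ.OccSO Y
  | .allSO Z φ => Z = Y ∨ φ.OccSO Y

/-- Replace the variable `x` by `y`. -/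
def rn (x y z : ℕ) : ℕ := if z = x then y else z

/-- Replace the first-order variable `x` by `y` everywhere in an MSO formula. -/
def MSO.renFO (x y : ℕ) : MSO A → MSO A
  | .top => .top
  | .pred a z => .pred a (rn x y z)
  | .le z w => .le (rn x y z) (rn x y w)
  | .mem z X => .mem (rn x y z) X
  | .not φ => .not (φ.renFO x y)
  | .and φ ψ => .and (φ.renFO x y) (ψ.renFO x y)
  | .allFO z φ => .allFO (rn x y z) (φ.renFO x y)
  | .allSO X φ => .allSO X (φ.renFO x y)

/-- Replace the second-order variable `X` by `Y` everywhere in an MSO formula. -/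
def MSO.renSO (X Y : ℕ) : MSO A → MSO A
  | .top => .top
  | .pred a z => .pred a z
  | .le z w => .le z w
  | .mem z Z => .mem z (rn X Y Z)
  | .not φ => .not (φ.renSO X Y)
  | .and φ ψ => .and (φ.renSO X Y) (ψ.renSO X Y)
  | .allFO z φ => .allFO z (φ.renSO X Y)
  | .allSO Z φ => .allSO (rn X Y Z) (φ.renSO X Y)

/-! ### step-wMSO -/

/-- step-wMSO formulas: `Ψ ::= r | φ ? Ψ₁ : Ψ₂`. -/
inductive Step (A R : Type) : Type
  | const : R → Step A R
  | ite : MSO A → Step A R → Step A R → Step A R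

open Classical in
/-- Semantics of step-wMSO. -/
noncomputable def Step.sem : Step A R → WVal A → R
  | .const r, _ => r
  | .ite φ Ψ₁ Ψ₂, m => if φ.Sat m then Ψ₁.sem m else Ψ₂.sem m

/-- `Ψ₁ ∼_Γ Ψ₂` for step-wMSO. -/
def StepEquiv (Γ : Set (MSO A)) (Ψ₁ Ψ₂ : Step A R) : Prop :=
  ∀ m : WVal A, SatAll Γ m → Ψ₁.sem m = Ψ₂.sem m

/-- `y` occurs in a step-wMSO formula (as a first-order variable). -/
def Step.OccFO (y : ℕ) : Step A R → Prop
  | .const _ => False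
  | .ite φ Ψ₁ Ψ₂ => φ.OccFO y ∨ Ψ₁.OccFO y ∨ Ψ₂.OccFO y

/-- `Y` occurs in a step-wMSO formula (as a second-order variable). -/
def Step.OccSO (Y : ℕ) : Step A R → Prop
  | .const _ => False
  | .ite φ Ψ₁ Ψ₂ => φ.OccSO Y ∨ Ψ₁.OccSO Y ∨ Ψ₂.OccSO Y

/-- Replace the first-order variable `x` by `y` in a step-wMSO formula. -/
def Step.renFO (x y : ℕ) : Step A R → Step A R
  | .const r => .const r
  | .ite φ Ψ₁ Ψ₂ => .ite (φ.renFO x y) (Ψ₁.renFO x y) (Ψ₂.renFO x y)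

/-- Replace the second-order variable `X` by `Y` in a step-wMSO formula. -/
def Step.renSO (X Y : ℕ) : Step A R → Step A R
  | .const r => .const r
  | .ite φ Ψ₁ Ψ₂ => .ite (φ.renSO X Y) (Ψ₁.renSO X Y) (Ψ₂.renSO X Y)

/-- The set `R(Ψ)` of weights occurring in a step-wMSO formula. -/
def Step.weights [DecidableEq R] : Step A R → Finset R
  | .const r => {r}
  | .ite _ Ψ₁ Ψ₂ => Ψ₁.weights ∪ Ψ₂.weights

/-- The MSO formula `φ(Ψ,r)` characterizing `⟦Ψ⟧ = r`. -/
def phiOf [DecidableEq R] : Step A R → R → MSO A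
  | .const r', r => if r' = r then .top else .not .top
  | .ite φ' Ψ₁ Ψ₂, r => (MSO.and φ' (phiOf Ψ₁ r)).or (MSO.and (.not φ') (phiOf Ψ₂ r))

/-- The equational proof system for step-wMSO: equational logic
(refl, symm, trans, congruence for the conditional) plus axioms (S1)–(S4),
where the MSO side condition of (S3) is semantic entailment. -/
inductive StepDeriv : Set (MSO A) → Step A R → Step A R → Prop
  | refl (Γ : Set (MSO A)) (Ψ : Step A R) : StepDeriv Γ Ψ Ψ
  | symm {Γ Ψ₁ Ψ₂} : StepDeriv Γ Ψ₁ Ψ₂ → StepDeriv Γ Ψ₂ Ψ₁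
  | trans {Γ Ψ₁ Ψ₂ Ψ₃} : StepDeriv Γ Ψ₁ Ψ₂ → StepDeriv Γ Ψ₂ Ψ₃ → StepDeriv Γ Ψ₁ Ψ₃
  | congIte {Γ Ψ₁ Ψ₁' Ψ₂ Ψ₂'} (φ : MSO A) :
      StepDeriv Γ Ψ₁ Ψ₁' → StepDeriv Γ Ψ₂ Ψ₂' →
      StepDeriv Γ (.ite φ Ψ₁ Ψ₂) (.ite φ Ψ₁' Ψ₂')
  | s1 {Γ Ψ₁ Ψ₂} (φ : MSO A) : StepDeriv Γ Ψ₁ Ψ₂ → StepDeriv (insert φ Γ) Ψ₁ Ψ₂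
  | s2 (Γ : Set (MSO A)) (φ : MSO A) (Ψ₁ Ψ₂ : Step A R) :
      StepDeriv Γ (.ite (.not φ) Ψ₁ Ψ₂) (.ite φ Ψ₂ Ψ₁)
  | s3 {Γ : Set (MSO A)} {φ : MSO A} (Ψ₁ Ψ₂ : Step A R) :
      Entails Γ φ → StepDeriv Γ (.ite φ Ψ₁ Ψ₂) Ψ₁
  | s4 {Γ : Set (MSO A)} {φ : MSO A} {Ψ₁ Ψ₂ Ψ : Step A R} :
      StepDeriv (insert φ Γ) Ψ₁ Ψ → StepDeriv (insert (.not φ) Γ) Ψ₂ Ψ →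
      StepDeriv Γ (.ite φ Ψ₁ Ψ₂) Ψ

/-! ### core-wMSO -/

/-- core-wMSO formulas. -/
inductive Core (A R : Type) : Type
  | zero : Core A R
  | prod : ℕ → Step A R → Core A R
  | ite : MSO A → Core A R → Core A R → Core A R
  | add : Core A R → Core A R → Core A R
  | sumFO : ℕ → Core A R → Core A R
  | sumSO : ℕ → Core A R → Core A R

open Classical in
/-- Abstract semantics of core-wMSO, valued in finite multisets of words over `R`. -/
noncomputable def Core.sem : Core A R → WVal A → Multiset (List R)
  | .zero, _ => 0
  | .prod x Ψ, m => {List.ofFn (fun i : Fin m.word.length => Ψ.sem (m.updFO x i))}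
  | .ite φ Φ₁ Φ₂, m => if φ.Sat m then Φ₁.sem m else Φ₂.sem m
  | .add Φ₁ Φ₂, m => Φ₁.sem m + Φ₂.sem m
  | .sumFO x Φ, m => ∑ i : Fin m.word.length, Φ.sem (m.updFO x i)
  | .sumSO X Φ, m => ∑ I : Finset (Fin m.word.length), Φ.sem (m.updSO X I)

/-- `Φ₁ ∼_Γ Φ₂` for core-wMSO. -/
def CoreEquiv (Γ : Set (MSO A)) (Φ₁ Φ₂ : Core A R) : Prop :=
  ∀ m : WVal A, SatAll Γ m → Φ₁.sem m = Φ₂.sem m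

/-- The set of weights occurring in a core-wMSO formula. -/
def Core.weights [DecidableEq R] : Core A R → Finset R
  | .zero => ∅
  | .prod _ Ψ => Ψ.weights
  | .ite _ Φ₁ Φ₂ => Φ₁.weights ∪ Φ₂.weights
  | .add Φ₁ Φ₂ => Φ₁.weights ∪ Φ₂.weights
  | .sumFO _ Φ => Φ.weights
  | .sumSO _ Φ => Φ.weights

/-- `y` occurs in a core-wMSO formula as a first-order variable. -/
def Core.OccFO (y : ℕ) : Core A R → Prop
  | .zero => False
  | .prod z Ψ => z = y ∨ Ψ.OccFO y
  | .ite φ Φ₁ Φ₂ => φ.OccFO y ∨ Φ₁.OccFO y ∨ Φ₂.OccFO y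
  | .add Φ₁ Φ₂ => Φ₁.OccFO y ∨ Φ₂.OccFO y
  | .sumFO z Φ => z = y ∨ Φ.OccFO y
  | .sumSO _ Φ => Φ.OccFO y

/-- `Y` occurs in a core-wMSO formula as a second-order variable. -/
def Core.OccSO (Y : ℕ) : Core A R → Prop
  | .zero => False
  | .prod _ Ψ => Ψ.OccSO Y
  | .ite φ Φ₁ Φ₂ => φ.OccSO Y ∨ Φ₁.OccSO Y ∨ Φ₂.OccSO Y
  | .add Φ₁ Φ₂ => Φ₁.OccSO Y ∨ Φ₂.OccSO Y
  | .sumFO _ Φ => Φ.OccSO Y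
  | .sumSO Z Φ => Z = Y ∨ Φ.OccSO Y

/-- Replace the first-order variable `x` by `y` in a core-wMSO formula. -/
def Core.renFO (x y : ℕ) : Core A R → Core A R
  | .zero => .zero
  | .prod z Ψ => .prod (rn x y z) (Ψ.renFO x y)
  | .ite φ Φ₁ Φ₂ => .ite (φ.renFO x y) (Φ₁.renFO x y) (Φ₂.renFO x y)
  | .add Φ₁ Φ₂ => .add (Φ₁.renFO x y) (Φ₂.renFO x y)
  | .sumFO z Φ => .sumFO (rn x y z) (Φ.renFO x y)
  | .sumSO Z Φ => .sumSO Z (Φ.renFO x y)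

/-- Replace the second-order variable `X` by `Y` in a core-wMSO formula. -/
def Core.renSO (X Y : ℕ) : Core A R → Core A R
  | .zero => .zero
  | .prod z Ψ => .prod z (Ψ.renSO X Y)
  | .ite φ Φ₁ Φ₂ => .ite (φ.renSO X Y) (Φ₁.renSO X Y) (Φ₂.renSO X Y)
  | .add Φ₁ Φ₂ => .add (Φ₁.renSO X Y) (Φ₂.renSO X Y)
  | .sumFO z Φ => .sumFO z (Φ.renSO X Y)
  | .sumSO Z Φ => .sumSO (rn X Y Z) (Φ.renSO X Y)

/-- core-wMSO formulas with no occurrence of the binary sum `+`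
(second normal form). -/
def Core.noAdd : Core A R → Prop
  | .zero => True
  | .prod _ _ => True
  | .ite _ Φ₁ Φ₂ => Φ₁.noAdd ∧ Φ₂.noAdd
  | .add _ _ => False
  | .sumFO _ Φ => Φ.noAdd
  | .sumSO _ Φ => Φ.noAdd

/-! ### The fragment core-wMSO(?,+) -/

/-- core-wMSO(?,+) formulas: `Φ ::= 𝟬 | ∏_x Ψ | φ ? Φ₁ : Φ₂ | Φ₁ + Φ₂`. -/
inductive CoreP (A R : Type) : Type
  | zero : CoreP A R
  | prod : ℕ → Step A R → CoreP A R
  | ite : MSO A → CoreP A R → CoreP A R → CoreP A R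
  | add : CoreP A R → CoreP A R → CoreP A R

open Classical in
/-- Abstract semantics of core-wMSO(?,+). -/
noncomputable def CoreP.sem : CoreP A R → WVal A → Multiset (List R)
  | .zero, _ => 0
  | .prod x Ψ, m => {List.ofFn (fun i : Fin m.word.length => Ψ.sem (m.updFO x i))}
  | .ite φ Φ₁ Φ₂, m => if φ.Sat m then Φ₁.sem m else Φ₂.sem m
  | .add Φ₁ Φ₂, m => Φ₁.sem m + Φ₂.sem m

/-- `Φ₁ ∼_Γ Φ₂` for core-wMSO(?,+). -/
def CorePEquiv (Γ : Set (MSO A)) (Φ₁ Φ₂ : CoreP A R) : Prop :=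
  ∀ m : WVal A, SatAll Γ m → Φ₁.sem m = Φ₂.sem m

/-- `y` occurs in a core-wMSO(?,+) formula as a first-order variable. -/
def CoreP.OccFO (y : ℕ) : CoreP A R → Prop
  | .zero => False
  | .prod z Ψ => z = y ∨ Ψ.OccFO y
  | .ite φ Φ₁ Φ₂ => φ.OccFO y ∨ Φ₁.OccFO y ∨ Φ₂.OccFO y
  | .add Φ₁ Φ₂ => Φ₁.OccFO y ∨ Φ₂.OccFO y

/-- The equational proof system for core-wMSO(?,+): equational logic
(refl, symm, trans, congruence for `?` and `+`) plus axioms (C1)–(C10),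
where MSO side conditions are semantic entailment. -/
inductive CorePDeriv : Set (MSO A) → CoreP A R → CoreP A R → Prop
  | refl (Γ : Set (MSO A)) (Φ : CoreP A R) : CorePDeriv Γ Φ Φ
  | symm {Γ Φ₁ Φ₂} : CorePDeriv Γ Φ₁ Φ₂ → CorePDeriv Γ Φ₂ Φ₁
  | trans {Γ Φ₁ Φ₂ Φ₃} : CorePDeriv Γ Φ₁ Φ₂ → CorePDeriv Γ Φ₂ Φ₃ → CorePDeriv Γ Φ₁ Φ₃
  | congIte {Γ Φ₁ Φ₁' Φ₂ Φ₂'} (φ : MSO A) :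
      CorePDeriv Γ Φ₁ Φ₁' → CorePDeriv Γ Φ₂ Φ₂' →
      CorePDeriv Γ (.ite φ Φ₁ Φ₂) (.ite φ Φ₁' Φ₂')
  | congAdd {Γ Φ₁ Φ₁' Φ₂ Φ₂'} :
      CorePDeriv Γ Φ₁ Φ₁' → CorePDeriv Γ Φ₂ Φ₂' →
      CorePDeriv Γ (.add Φ₁ Φ₂) (.add Φ₁' Φ₂')
  | c1 (Γ : Set (MSO A)) (Φ : CoreP A R) : CorePDeriv Γ (Φ.add .zero) Φ
  | c2 (Γ : Set (MSO A)) (Φ₁ Φ₂ : CoreP A R) : CorePDeriv Γ (Φ₁.add Φ₂) (Φ₂.add Φ₁)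
  | c3 (Γ : Set (MSO A)) (Φ₁ Φ₂ Φ₃ : CoreP A R) :
      CorePDeriv Γ ((Φ₁.add Φ₂).add Φ₃) (Φ₁.add (Φ₂.add Φ₃))
  | c4 {Γ : Set (MSO A)} {Ψ₁ Ψ₂ : Step A R} (x : ℕ) :
      (∀ ψ ∈ Γ, ¬ ψ.FreeFO x) → StepDeriv Γ Ψ₁ Ψ₂ →
      CorePDeriv Γ (.prod x Ψ₁) (.prod x Ψ₂)
  | c5 (Γ : Set (MSO A)) (x y : ℕ) (Ψ : Step A R) :
      ¬ Ψ.OccFO y → CorePDeriv Γ (.prod x Ψ) (.prod y (Ψ.renFO x y))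
  | c6 {Γ Φ₁ Φ₂} (φ : MSO A) : CorePDeriv Γ Φ₁ Φ₂ → CorePDeriv (insert φ Γ) Φ₁ Φ₂
  | c7 (Γ : Set (MSO A)) (φ : MSO A) (Φ₁ Φ₂ : CoreP A R) :
      CorePDeriv Γ (.ite (.not φ) Φ₁ Φ₂) (.ite φ Φ₂ Φ₁)
  | c8 {Γ : Set (MSO A)} {φ : MSO A} (Φ₁ Φ₂ : CoreP A R) :
      Entails Γ φ → CorePDeriv Γ (.ite φ Φ₁ Φ₂) Φ₁
  | c9 {Γ : Set (MSO A)} {φ : MSO A} {Φ₁ Φ₂ Φ : CoreP A R} :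
      CorePDeriv (insert φ Γ) Φ₁ Φ → CorePDeriv (insert (.not φ) Γ) Φ₂ Φ →
      CorePDeriv Γ (.ite φ Φ₁ Φ₂) Φ
  | c10 (Γ : Set (MSO A)) (φ : MSO A) (Φ' Φ'' Φ : CoreP A R) :
      CorePDeriv Γ ((CoreP.ite φ Φ' Φ'').add Φ) (.ite φ (Φ'.add Φ) (Φ''.add Φ))

/-- Normal-form `M`-layer: `M ::= ∏_x Ψ | M₁ + M₂`. -/
inductive IsM : CoreP A R → Prop
  | prod (x : ℕ) (Ψ : Step A R) : IsM (.prod x Ψ)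
  | add {M₁ M₂ : CoreP A R} : IsM M₁ → IsM M₂ → IsM (M₁.add M₂)

/-- Normal form for core-wMSO(?,+): `N ::= φ ? N₁ : N₂ | M | 𝟬`. -/
inductive IsNF : CoreP A R → Prop
  | zero : IsNF .zero
  | ofM {M : CoreP A R} : IsM M → IsNF M
  | ite {N₁ N₂ : CoreP A R} (φ : MSO A) : IsNF N₁ → IsNF N₂ → IsNF (.ite φ N₁ N₂)

/-- The finite sum `∑_{i=1}^k ∏_x Ψ_i` of products. -/
def sumProds (x : ℕ) (L : List (Step A R)) : CoreP A R :=
  (L.map (CoreP.prod x)).foldr CoreP.add CoreP.zero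

/-! ### The full core-wMSO proof system -/

/-- `Σ_{X⃗}` for a sequence of second-order variables. -/
def bigSumSO (Xs : List ℕ) (Φ : Core A R) : Core A R := Xs.foldr Core.sumSO Φ

/-- The equational proof system for full core-wMSO: equational logic plus
axioms (C1)–(C16) together with the first-order analogues of (C11)–(C16);
MSO side conditions are read semantically. -/
inductive CoreDeriv : Set (MSO A) → Core A R → Core A R → Prop
  | refl (Γ : Set (MSO A)) (Φ : Core A R) : CoreDeriv Γ Φ Φ
  | symm {Γ Φ₁ Φ₂} : CoreDeriv Γ Φ₁ Φ₂ → CoreDeriv Γ Φ₂ Φ₁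
  | trans {Γ Φ₁ Φ₂ Φ₃} : CoreDeriv Γ Φ₁ Φ₂ → CoreDeriv Γ Φ₂ Φ₃ → CoreDeriv Γ Φ₁ Φ₃
  | congIte {Γ Φ₁ Φ₁' Φ₂ Φ₂'} (φ : MSO A) :
      CoreDeriv Γ Φ₁ Φ₁' → CoreDeriv Γ Φ₂ Φ₂' →
      CoreDeriv Γ (.ite φ Φ₁ Φ₂) (.ite φ Φ₁' Φ₂')
  | congAdd {Γ Φ₁ Φ₁' Φ₂ Φ₂'} :
      CoreDeriv Γ Φ₁ Φ₁' → CoreDeriv Γ Φ₂ Φ₂' →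
      CoreDeriv Γ (.add Φ₁ Φ₂) (.add Φ₁' Φ₂')
  | c1 (Γ : Set (MSO A)) (Φ : Core A R) : CoreDeriv Γ (Φ.add .zero) Φ
  | c2 (Γ : Set (MSO A)) (Φ₁ Φ₂ : Core A R) : CoreDeriv Γ (Φ₁.add Φ₂) (Φ₂.add Φ₁)
  | c3 (Γ : Set (MSO A)) (Φ₁ Φ₂ Φ₃ : Core A R) :
      CoreDeriv Γ ((Φ₁.add Φ₂).add Φ₃) (Φ₁.add (Φ₂.add Φ₃))
  | c4 {Γ : Set (MSO A)} {Ψ₁ Ψ₂ : Step A R} (x : ℕ) :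
      (∀ ψ ∈ Γ, ¬ ψ.FreeFO x) → StepDeriv Γ Ψ₁ Ψ₂ →
      CoreDeriv Γ (.prod x Ψ₁) (.prod x Ψ₂)
  | c5 (Γ : Set (MSO A)) (x y : ℕ) (Ψ : Step A R) :
      ¬ Ψ.OccFO y → CoreDeriv Γ (.prod x Ψ) (.prod y (Ψ.renFO x y))
  | c6 {Γ Φ₁ Φ₂} (φ : MSO A) : CoreDeriv Γ Φ₁ Φ₂ → CoreDeriv (insert φ Γ) Φ₁ Φ₂
  | c7 (Γ : Set (MSO A)) (φ : MSO A) (Φ₁ Φ₂ : Core A R) :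
      CoreDeriv Γ (.ite (.not φ) Φ₁ Φ₂) (.ite φ Φ₂ Φ₁)
  | c8 {Γ : Set (MSO A)} {φ : MSO A} (Φ₁ Φ₂ : Core A R) :
      Entails Γ φ → CoreDeriv Γ (.ite φ Φ₁ Φ₂) Φ₁
  | c9 {Γ : Set (MSO A)} {φ : MSO A} {Φ₁ Φ₂ Φ : Core A R} :
      CoreDeriv (insert φ Γ) Φ₁ Φ → CoreDeriv (insert (.not φ) Γ) Φ₂ Φ →
      CoreDeriv Γ (.ite φ Φ₁ Φ₂) Φ
  | c10 (Γ : Set (MSO A)) (φ : MSO A) (Φ' Φ'' Φ : Core A R) :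
      CoreDeriv Γ ((Core.ite φ Φ' Φ'').add Φ) (.ite φ (Φ'.add Φ) (Φ''.add Φ))
  | c11 {Γ : Set (MSO A)} {Φ₁ Φ₂ : Core A R} (X : ℕ) :
      (∀ ψ ∈ Γ, ¬ ψ.FreeSO X) → CoreDeriv Γ Φ₁ Φ₂ →
      CoreDeriv Γ (.sumSO X Φ₁) (.sumSO X Φ₂)
  | c11fo {Γ : Set (MSO A)} {Φ₁ Φ₂ : Core A R} (x : ℕ) :
      (∀ ψ ∈ Γ, ¬ ψ.FreeFO x) → CoreDeriv Γ Φ₁ Φ₂ →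
      CoreDeriv Γ (.sumFO x Φ₁) (.sumFO x Φ₂)
  | c12 (Γ : Set (MSO A)) (X Y : ℕ) (Φ : Core A R) :
      ¬ Φ.OccSO Y → CoreDeriv Γ (.sumSO X Φ) (.sumSO Y (Φ.renSO X Y))
  | c12fo (Γ : Set (MSO A)) (x y : ℕ) (Φ : Core A R) :
      ¬ Φ.OccFO y → CoreDeriv Γ (.sumFO x Φ) (.sumFO y (Φ.renFO x y))
  | c13 (Γ : Set (MSO A)) (X Y : ℕ) (Φ : Core A R) :
      CoreDeriv Γ (.sumSO X (.sumSO Y Φ)) (.sumSO Y (.sumSO X Φ))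
  | c13fo (Γ : Set (MSO A)) (x y : ℕ) (Φ : Core A R) :
      CoreDeriv Γ (.sumFO x (.sumFO y Φ)) (.sumFO y (.sumFO x Φ))
  | c14 (Γ : Set (MSO A)) (X : ℕ) (Φ₁ Φ₂ : Core A R) :
      CoreDeriv Γ (.sumSO X (Φ₁.add Φ₂)) ((Core.sumSO X Φ₁).add (.sumSO X Φ₂))
  | c14fo (Γ : Set (MSO A)) (x : ℕ) (Φ₁ Φ₂ : Core A R) :
      CoreDeriv Γ (.sumFO x (Φ₁.add Φ₂)) ((Core.sumFO x Φ₁).add (.sumFO x Φ₂))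
  | c15 (Γ : Set (MSO A)) (X : ℕ) (φ : MSO A) (Φ₁ Φ₂ : Core A R) :
      ¬ φ.FreeSO X →
      CoreDeriv Γ (.ite φ (.sumSO X Φ₁) (.sumSO X Φ₂)) (.sumSO X (.ite φ Φ₁ Φ₂))
  | c15fo (Γ : Set (MSO A)) (x : ℕ) (φ : MSO A) (Φ₁ Φ₂ : Core A R) :
      ¬ φ.FreeFO x →
      CoreDeriv Γ (.ite φ (.sumFO x Φ₁) (.sumFO x Φ₂)) (.sumFO x (.ite φ Φ₁ Φ₂))
  | c16 (Γ : Set (MSO A)) (X : ℕ) (φ : MSO A) (Φ : Core A R) :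
      (∀ m : WVal A, SatAll Γ m → ∃! I : Finset (Fin m.word.length), φ.Sat (m.updSO X I)) →
      ¬ Φ.OccSO X → CoreDeriv Γ Φ (.sumSO X (.ite φ Φ .zero))
  | c16fo (Γ : Set (MSO A)) (x : ℕ) (φ : MSO A) (Φ : Core A R) :
      (∀ m : WVal A, SatAll Γ m → ∃! i : Fin m.word.length, φ.Sat (m.updFO x i)) →
      ¬ Φ.OccFO x → CoreDeriv Γ Φ (.sumFO x (.ite φ Φ .zero))

/-! ### Weighted automata -/

/-- An `R`-weighted automaton over `A` with state type `Q`
(transition relation `delta`, weight function `wgt`, initial states `start`,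
final states `final`). -/
structure WA (A R Q : Type) where
  delta : Q → A → Q → Prop
  wgt : Q → A → Q → R
  start : Set Q
  final : Set Q

/-- A run of the automaton on `w`, described by its sequence of states, is
accepting if it starts in an initial state, ends in a final state, and each
step is a transition. -/
def WA.IsAccRun {Q : Type} (M : WA A R Q) (w : List A) (qs : Fin (w.length + 1) → Q) : Prop :=
  qs 0 ∈ M.start ∧ qs (Fin.last w.length) ∈ M.final ∧
    ∀ i : Fin w.length, M.delta (qs i.castSucc) (w.get i) (qs i.succ)

/-- The weight of a run: the word of the weights of its transitions. -/
def WA.runWeight {Q : Type} (M : WA A R Q) (w : List A) (qs : Fin (w.length + 1) → Q) : List R :=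
  List.ofFn fun i : Fin w.length => M.wgt (qs i.castSucc) (w.get i) (qs i.succ)

open Classical in
/-- The abstract semantics of a weighted automaton: the multiset of the
weights of its accepting runs on `w`. -/
noncomputable def WA.sem {Q : Type} [Fintype Q] [DecidableEq Q] (M : WA A R Q)
    (w : List A) : Multiset (List R) :=
  ((Finset.univ.filter (M.IsAccRun w)).val).map (M.runWeight w)

lemma sat_or {A : Type} {φ ψ : MSO A} {m : WVal A} :
    (φ.or ψ).Sat m ↔ φ.Sat m ∨ ψ.Sat m := by
  simp [MSO.or, MSO.Sat]
  tauto

lemma sat_bigOr {A : Type} {l : List (MSO A)} {m : WVal A} :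
    (bigOr l).Sat m ↔ ∃ φ ∈ l, φ.Sat m := by
  induction l with
  | nil => simp [bigOr, MSO.Sat]
  | cons φ l ih => simp [bigOr, sat_or, ih]

lemma sat_phiOf {A R : Type} [DecidableEq R] (Ψ : Step A R) (r : R) (m : WVal A) :
    (phiOf Ψ r).Sat m ↔ Ψ.sem m = r := by
  induction Ψ with
  | const r' =>
    by_cases h : r' = r <;> simp [phiOf, h, MSO.Sat, Step.sem]
  | ite φ Ψ₁ Ψ₂ ih₁ ih₂ =>
    simp only [phiOf, sat_or, MSO.Sat, Step.sem]
    by_cases h : φ.Sat m <;> simp [h, ih₁, ih₂]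

lemma sem_mem_weights {A R : Type} [DecidableEq R] (Ψ : Step A R) (m : WVal A) :
    Ψ.sem m ∈ Ψ.weights := by
  induction Ψ with
  | const r => simp [Step.sem, Step.weights]
  | ite φ Ψ₁ Ψ₂ ih₁ ih₂ =>
    simp only [Step.sem, Step.weights, Finset.mem_union]
    by_cases h : φ.Sat m <;> simp [h, ih₁, ih₂]

/-- For all step-wMSO formulas `Ψ₁`, `Ψ₂`: there is
`(w,σ) ∈ Σ⁺_val` with `⟦Ψ₁⟧(w,σ) = ⟦Ψ₂⟧(w,σ)` iff the MSO formula
`⋁_{r ∈ R(Ψ₁) ∩ R(Ψ₂)} (φ(Ψ₁,r) ∧ φ(Ψ₂,r))` is satisfiable. -/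
theorem statement2 {A R : Type} [Fintype A] [DecidableEq R] (Ψ₁ Ψ₂ : Step A R) :
    (∃ m : WVal A, Ψ₁.sem m = Ψ₂.sem m) ↔
      ∃ m : WVal A,
        (bigOr (((Ψ₁.weights ∩ Ψ₂.weights).toList).map
          (fun r => MSO.and (phiOf Ψ₁ r) (phiOf Ψ₂ r)))).Sat m := by
  constructor
  · rintro ⟨m, h⟩
    refine ⟨m, ?_⟩
    rw [sat_bigOr]
    refine ⟨_, List.mem_map.2 ⟨Ψ₁.sem m, ?_, rfl⟩, ?_⟩
    · rw [Finset.mem_toList, Finset.mem_inter]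
      exact ⟨sem_mem_weights Ψ₁ m, h ▸ sem_mem_weights Ψ₂ m⟩
    · exact ⟨(sat_phiOf Ψ₁ _ m).2 rfl, (sat_phiOf Ψ₂ _ m).2 h.symm⟩
  · rintro ⟨m, h⟩
    rw [sat_bigOr] at h
    obtain ⟨φ, hφ, hs⟩ := h
    obtain ⟨r, _, rfl⟩ := List.mem_map.1 hφ
    obtain ⟨h1, h2⟩ := hs
    exact ⟨m, ((sat_phiOf Ψ₁ r m).1 h1).trans ((sat_phiOf Ψ₂ r m).1 h2).symm⟩

end WMSO
end

section
/- For every finite set Γ of MSO formulas, every MSO formula φ, and all step-wMSO formulas Ψ₁, Ψ₂: if Γ ⊨ φ and Γ∪{φ} ⊢ Ψ₁ ≈ Ψ₂ is derivable, then Γ ⊢ Ψ₁ ≈ Ψ₂ is derivable (cut elimination). -/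
namespace WMSO

variable {A R : Type}

/-- **cut elimination.** For every finite `Γ`, MSO formula `φ`,
and step-wMSO formulas `Ψ₁`, `Ψ₂`: if `Γ ⊨ φ` and `Γ∪{φ} ⊢ Ψ₁ ≈ Ψ₂` is
derivable, then `Γ ⊢ Ψ₁ ≈ Ψ₂` is derivable. -/
theorem statement6 {A R : Type} [Fintype A] (Γ : Set (MSO A)) (hfin : Γ.Finite)
    (φ : MSO A) (Ψ₁ Ψ₂ : Step A R)
    (hφ : Entails Γ φ)
    (h : StepDeriv (insert φ Γ) Ψ₁ Ψ₂) :
    StepDeriv Γ Ψ₁ Ψ₂ :=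
  StepDeriv.trans (StepDeriv.symm (StepDeriv.s3 Ψ₁ Ψ₂ hφ))
    (StepDeriv.s4 h (StepDeriv.refl _ _))

end WMSO
end

section
/- Soundness and completeness of step-wMSO: for every finite set Γ of MSO formulas and all step-wMSO formulas Ψ₁, Ψ₂, Ψ₁ ∼_Γ Ψ₂ if and only if Γ ⊢ Ψ₁ ≈ Ψ₂ is derivable. -/
namespace WMSO

variable {A R : Type}

/-! ### Auxiliary lemmas for statement 8 -/

lemma unsatStepDeriv {A R : Type} {Γ : Set (MSO A)} (h : ∀ m : WVal A, ¬ SatAll Γ m)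
    (Ψ₁ Ψ₂ : Step A R) : StepDeriv Γ Ψ₁ Ψ₂ := by
  have h1 : StepDeriv Γ (.ite (.not .top) Ψ₁ Ψ₂) Ψ₁ :=
    .s3 _ _ (fun m hm => absurd hm (h m))
  have h2 : StepDeriv Γ (.ite (.not .top) Ψ₁ Ψ₂) (.ite .top Ψ₂ Ψ₁) := .s2 _ _ _ _
  have h3 : StepDeriv Γ (.ite .top Ψ₂ Ψ₁) Ψ₂ := .s3 _ _ (fun _ _ => trivial)
  exact h1.symm.trans (h2.trans h3)

lemma constStepComplete {A R : Type} (r : R) :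
    ∀ (Ψ : Step A R) (Γ : Set (MSO A)),
      (∀ m : WVal A, SatAll Γ m → Ψ.sem m = r) → StepDeriv Γ (.const r) Ψ
  | .const r', Γ, h => by
      by_cases hs : ∃ m : WVal A, SatAll Γ m
      · obtain ⟨m, hm⟩ := hs
        have := h m hm
        simp only [Step.sem] at this
        subst this
        exact .refl _ _
      · push_neg at hs
        exact unsatStepDeriv hs _ _
  | .ite φ a b, Γ, h => by
      have h1 : StepDeriv (insert φ Γ) (.const r) a := by
        refine constStepComplete r a _ (fun m hm => ?_)
        have hφ : φ.Sat m := hm φ (Set.mem_insert _ _)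
        have := h m (fun ψ hψ => hm ψ (Set.mem_insert_of_mem _ hψ))
        simpa only [Step.sem, if_pos hφ] using this
      have h2 : StepDeriv (insert (.not φ) Γ) (.const r) b := by
        refine constStepComplete r b _ (fun m hm => ?_)
        have hφ : ¬ φ.Sat m := hm (.not φ) (Set.mem_insert _ _)
        have := h m (fun ψ hψ => hm ψ (Set.mem_insert_of_mem _ hψ))
        simpa only [Step.sem, if_neg hφ] using this
      exact (StepDeriv.s4 h1.symm h2.symm).symm

lemma stepSound {A R : Type} {Γ : Set (MSO A)} {Ψ₁ Ψ₂ : Step A R}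
    (h : StepDeriv Γ Ψ₁ Ψ₂) : StepEquiv Γ Ψ₁ Ψ₂ := by
  induction h with
  | refl => exact fun m hm => rfl
  | symm _ ih => exact fun m hm => (ih m hm).symm
  | trans _ _ ih1 ih2 => exact fun m hm => (ih1 m hm).trans (ih2 m hm)
  | @congIte Γ Ψ₁ Ψ₁' Ψ₂ Ψ₂' φ _ _ ih1 ih2 =>
      intro m hm
      simp only [Step.sem]
      by_cases hφ : φ.Sat m
      · rw [if_pos hφ, if_pos hφ]; exact ih1 m hm
      · rw [if_neg hφ, if_neg hφ]; exact ih2 m hm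
  | s1 φ _ ih => exact fun m hm => ih m (fun ψ hψ => hm ψ (Set.mem_insert_of_mem _ hψ))
  | s2 Γ φ Ψ₁ Ψ₂ =>
      intro m hm
      simp only [Step.sem]
      by_cases hφ : φ.Sat m
      · rw [if_neg (show ¬ (MSO.not φ).Sat m from not_not_intro hφ), if_pos hφ]
      · rw [if_pos (show (MSO.not φ).Sat m from hφ), if_neg hφ]
  | s3 _ _ he =>
      intro m hm
      simp only [Step.sem]
      rw [if_pos (he m hm)]
  | @s4 Γ φ Ψ₁ Ψ₂ Ψ _ _ ih1 ih2 =>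
      intro m hm
      simp only [Step.sem]
      by_cases hφ : φ.Sat m
      · rw [if_pos hφ]
        exact ih1 m (fun ψ hψ => by
          rcases Set.mem_insert_iff.mp hψ with rfl | hψ
          · exact hφ
          · exact hm ψ hψ)
      · rw [if_neg hφ]
        exact ih2 m (fun ψ hψ => by
          rcases Set.mem_insert_iff.mp hψ with rfl | hψ
          · exact hφ
          · exact hm ψ hψ)

lemma stepComplete {A R : Type} :
    ∀ (Ψ₁ Ψ₂ : Step A R) (Γ : Set (MSO A)),
      StepEquiv Γ Ψ₁ Ψ₂ → StepDeriv Γ Ψ₁ Ψ₂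
  | .const r, Ψ₂, Γ, h =>
      constStepComplete r Ψ₂ Γ (fun m hm => (h m hm).symm)
  | .ite φ a b, Ψ₂, Γ, h => by
      have h1 : StepDeriv (insert φ Γ) a Ψ₂ := by
        refine stepComplete a Ψ₂ _ (fun m hm => ?_)
        have hφ : φ.Sat m := hm φ (Set.mem_insert _ _)
        have := h m (fun ψ hψ => hm ψ (Set.mem_insert_of_mem _ hψ))
        simpa only [Step.sem, if_pos hφ] using this
      have h2 : StepDeriv (insert (.not φ) Γ) b Ψ₂ := by
        refine stepComplete b Ψ₂ _ (fun m hm => ?_)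
        have hφ : ¬ φ.Sat m := hm (.not φ) (Set.mem_insert _ _)
        have := h m (fun ψ hψ => hm ψ (Set.mem_insert_of_mem _ hψ))
        simpa only [Step.sem, if_neg hφ] using this
      exact StepDeriv.s4 h1 h2

/-- **soundness and completeness of step-wMSO.** For every
finite set `Γ` of MSO formulas and all step-wMSO formulas `Ψ₁`, `Ψ₂`:
`Ψ₁ ∼_Γ Ψ₂` iff `Γ ⊢ Ψ₁ ≈ Ψ₂` is derivable. -/
theorem statement8 {A R : Type} [Fintype A] (Γ : Set (MSO A)) (hfin : Γ.Finite)
    (Ψ₁ Ψ₂ : Step A R) :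
    StepEquiv Γ Ψ₁ Ψ₂ ↔ StepDeriv Γ Ψ₁ Ψ₂ :=
  ⟨stepComplete Ψ₁ Ψ₂ Γ, stepSound⟩

end WMSO
end

section
/- If Φ₁ and Φ₂ are core-wMSO(?,+) formulas in normal form, then for every finite set Γ of MSO formulas there exists a core-wMSO(?,+) formula Φ, also in normal form, such that Γ ⊢ Φ ≈ Φ₁ + Φ₂ is derivable. -/
namespace WMSO

variable {A R : Type}

/-- If `Φ₁` and `Φ₂` are core-wMSO(?,+) formulas in normal
form, then for every finite `Γ` there is a formula `Φ`, also in normal form,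
with `Γ ⊢ Φ ≈ Φ₁ + Φ₂` derivable. -/
theorem statement11 {A R : Type} [Fintype A] (Γ : Set (MSO A)) (hfin : Γ.Finite)
    (Φ₁ Φ₂ : CoreP A R) (h₁ : IsNF Φ₁) (h₂ : IsNF Φ₂) :
    ∃ Φ : CoreP A R, IsNF Φ ∧ CorePDeriv Γ Φ (Φ₁.add Φ₂) := by
  clear hfin
  induction h₁ with
  | zero =>
    exact ⟨Φ₂, h₂, .trans (.symm (.c1 Γ Φ₂)) (.c2 Γ Φ₂ .zero)⟩
  | @ofM M hM =>
    induction h₂ with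
    | zero => exact ⟨M, .ofM hM, .symm (.c1 Γ M)⟩
    | @ofM M₂ hM₂ => exact ⟨M.add M₂, .ofM (hM.add hM₂), .refl Γ _⟩
    | @ite N₁ N₂ φ h₁' h₂' ih₁ ih₂ =>
      obtain ⟨Φ', hΦ', d₁⟩ := ih₁
      obtain ⟨Φ'', hΦ'', d₂⟩ := ih₂
      refine ⟨.ite φ Φ' Φ'', .ite φ hΦ' hΦ'', ?_⟩
      have step1 : CorePDeriv Γ (CoreP.ite φ Φ' Φ'')
          (.ite φ (M.add N₁) (M.add N₂)) := .congIte φ d₁ d₂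
      have step2 : CorePDeriv Γ (CoreP.ite φ (M.add N₁) (M.add N₂))
          (.ite φ (N₁.add M) (N₂.add M)) :=
        .congIte φ (.c2 Γ M N₁) (.c2 Γ M N₂)
      have step3 : CorePDeriv Γ (CoreP.ite φ (N₁.add M) (N₂.add M))
          ((CoreP.ite φ N₁ N₂).add M) := .symm (.c10 Γ φ N₁ N₂ M)
      exact .trans (.trans (.trans step1 step2) step3)
        (.c2 Γ (CoreP.ite φ N₁ N₂) M)
  | @ite N₁ N₂ φ h₁' h₂' ih₁ ih₂ =>
    obtain ⟨Φ', hΦ', d₁⟩ := ih₁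
    obtain ⟨Φ'', hΦ'', d₂⟩ := ih₂
    refine ⟨.ite φ Φ' Φ'', .ite φ hΦ' hΦ'', ?_⟩
    exact .trans (.congIte φ d₁ d₂) (.symm (.c10 Γ φ N₁ N₂ Φ₂))

end WMSO
end

section
/- For every finite set Γ of MSO formulas and every core-wMSO(?,+) formula Φ, there exists a core-wMSO(?,+) formula Φ' in normal form such that Γ ⊢ Φ ≈ Φ' is derivable. -/
namespace WMSO

variable {A R : Type}

lemma addM_nf {A R : Type} {Γ : Set (MSO A)} {M N₂ : CoreP A R}
    (hM : IsM M) (h₂ : IsNF N₂) :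
    ∃ N, IsNF N ∧ CorePDeriv Γ (M.add N₂) N := by
  induction h₂ with
  | zero => exact ⟨M, .ofM hM, .c1 Γ M⟩
  | ofM hM₂ => exact ⟨_, .ofM (hM.add hM₂), .refl _ _⟩
  | ite φ h1 h2 ih1 ih2 =>
    obtain ⟨Na, hNa, da⟩ := ih1
    obtain ⟨Nb, hNb, db⟩ := ih2
    exact ⟨.ite φ Na Nb, .ite φ hNa hNb,
      (CorePDeriv.c2 ..).trans ((CorePDeriv.c10 ..).trans
        (CorePDeriv.congIte φ ((CorePDeriv.c2 ..).trans da)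
          ((CorePDeriv.c2 ..).trans db)))⟩

lemma addNF_nf {A R : Type} {Γ : Set (MSO A)} {N₁ : CoreP A R} (h₁ : IsNF N₁) :
    ∀ N₂ : CoreP A R, IsNF N₂ → ∃ N, IsNF N ∧ CorePDeriv Γ (N₁.add N₂) N := by
  induction h₁ with
  | zero =>
    intro N₂ h₂
    exact ⟨N₂, h₂, (CorePDeriv.c2 ..).trans (CorePDeriv.c1 ..)⟩
  | ofM hM => exact fun N₂ h₂ => addM_nf hM h₂
  | ite φ h1 h2 ih1 ih2 =>
    intro N₂ h₂
    obtain ⟨Na, hNa, da⟩ := ih1 N₂ h₂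
    obtain ⟨Nb, hNb, db⟩ := ih2 N₂ h₂
    exact ⟨.ite φ Na Nb, .ite φ hNa hNb,
      (CorePDeriv.c10 ..).trans (CorePDeriv.congIte φ da db)⟩

/-- For every finite `Γ` and every core-wMSO(?,+) formula
`Φ`, there is a formula `Φ'` in normal form with `Γ ⊢ Φ ≈ Φ'` derivable. -/
theorem statement12 {A R : Type} [Fintype A] (Γ : Set (MSO A)) (hfin : Γ.Finite)
    (Φ : CoreP A R) :
    ∃ Φ' : CoreP A R, IsNF Φ' ∧ CorePDeriv Γ Φ Φ' := by
  induction Φ with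
  | zero => exact ⟨.zero, .zero, .refl _ _⟩
  | prod x Ψ => exact ⟨.prod x Ψ, .ofM (.prod x Ψ), .refl _ _⟩
  | ite φ Φ₁ Φ₂ ih1 ih2 =>
    obtain ⟨N₁, hN₁, d₁⟩ := ih1
    obtain ⟨N₂, hN₂, d₂⟩ := ih2
    exact ⟨.ite φ N₁ N₂, .ite φ hN₁ hN₂, .congIte φ d₁ d₂⟩
  | add Φ₁ Φ₂ ih1 ih2 =>
    obtain ⟨N₁, hN₁, d₁⟩ := ih1
    obtain ⟨N₂, hN₂, d₂⟩ := ih2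
    obtain ⟨N, hN, d⟩ := addNF_nf hN₁ N₂ hN₂
    exact ⟨N, hN, (CorePDeriv.congAdd d₁ d₂).trans d⟩

end WMSO
end
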